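/- arXiv:1909.01615 — 2 statements merged into one kernel-verified Lean document; each statement's English description precedes it below -/
import Mathlib

section
/- Let P be a polynomial over ℂ of degree d ≥ 2 such that every complex root of P' is also a root of P. Then P' divides P in ℂ[X]. -/
open Polynomial

theorem stmt_1 (P : Polynomial ℂ) (d : ℕ) (hd : 2 ≤ d) (hdeg : P.natDegree = d)
    (hroots : ∀ z : ℂ, P.derivative.eval z = 0 → P.eval z = 0) :
    P.derivative ∣ P := by
  have hP0 : P ≠ 0 := fun h => by simp [h] at hdeg; omega
  have hd' : P.derivative ≠ 0 := by
    intro h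
    have := natDegree_eq_zero_of_derivative_eq_zero h
    omega
  classical
  rw [Splits.dvd_iff_roots_le_roots (IsAlgClosed.splits P.derivative) hd' hP0,
    Multiset.le_iff_count]
  intro a
  simp only [count_roots]
  by_cases haf : P.derivative.eval a = 0
  · have hPa : P.eval a = 0 := hroots a haf
    rw [derivative_rootMultiplicity_of_root hPa]
    omega
  · simp [rootMultiplicity_eq_zero haf]
end

section
/- Let d ≥ 2, a ∈ ℂ, α, δ ∈ ℂ*. Consider the 1-form ω = α(y − ax)^d dx + δ x^d (x dy − y dx), with coefficient polynomials ω_x = α(y−ax)^d − δ x^d y and ω_y = δ x^{d+1}. Under the linear substitution φ(x,y) = ((α/δ)x, (α/δ)(y + ax)), the pullback φ*ω equals (α^{d+2}/δ^{d+1}) · ω̄ where ω̄ = y^d dx + x^d(x dy − y dx), i.e. the following two polynomial identities hold: ω_x(φ(x,y))·(α/δ) + ω_y(φ(x,y))·(α/δ)·a = (α^{d+2}/δ^{d+1})·(y^d − x^d y) and ω_y(φ(x,y))·(α/δ) = (α^{d+2}/δ^{d+1})·x^{d+1}. -/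
/-!
Write `β = α / δ`, so that `α = δ β` and `α ^ (d + 2) / δ ^ (d + 1) = δ β ^ (d + 2)`. The shear
part of `φ` sends `y - a x` to `β y`, so `φ` turns `α (y - a x) ^ d` into `δ β ^ (d + 1) y ^ d`,
and the remaining terms match `x ^ d (x dy - y dx)` after the `a`-terms cancel.
-/

open MvPolynomial

section ScaledShear

variable {R : Type*} [CommRing R] (a β : R)

noncomputable def scaledShear : MvPolynomial (Fin 2) R →ₐ[R] MvPolynomial (Fin 2) R :=
  aeval ![C β * X 0, C β * (X 1 + C a * X 0)]

theorem scaledShear_X_one_sub_C_mul_X_zero :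
    scaledShear a β (X 1 - C a * X 0) = C β * X 1 := by
  simp only [scaledShear, map_sub, map_mul, aeval_X, aeval_C, algebraMap_eq, Matrix.cons_val_zero,
    Matrix.cons_val_one]
  ring

theorem pullback_scaledShear (d : ℕ) (δ : R) :
    scaledShear a β (C (δ * β) * (X 1 - C a * X 0) ^ d - C δ * X 0 ^ d * X 1) * C β
        + scaledShear a β (C δ * X 0 ^ (d + 1)) * C β * C a
      = C (δ * β ^ (d + 2)) * (X 1 ^ d - X 0 ^ d * X 1) ∧
    scaledShear a β (C δ * X 0 ^ (d + 1)) * C β = C (δ * β ^ (d + 2)) * X 0 ^ (d + 1) := by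
  rw [map_sub, map_mul, map_pow, scaledShear_X_one_sub_C_mul_X_zero]
  simp only [scaledShear, map_mul, map_pow, aeval_X, aeval_C, algebraMap_eq, Matrix.cons_val_zero,
    Matrix.cons_val_one]
  constructor <;> ring

end ScaledShear

theorem pow_add_two_div_pow_add_one {K : Type*} [Field K] {δ : K} (hδ : δ ≠ 0) (α : K) (d : ℕ) :
    α ^ (d + 2) / δ ^ (d + 1) = δ * (α / δ) ^ (d + 2) := by
  rw [div_pow, mul_div_assoc', pow_succ' δ (d + 1), mul_div_mul_left _ _ hδ]

theorem stmt_5_general (d : ℕ) (a α δ : ℂ) (hδ : δ ≠ 0)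
    (ωx ωy : MvPolynomial (Fin 2) ℂ)
    (hωx : ωx = C α * (X 1 - C a * X 0) ^ d - C δ * (X 0) ^ d * X 1)
    (hωy : ωy = C δ * (X 0) ^ (d + 1))
    (φ : MvPolynomial (Fin 2) ℂ →ₐ[ℂ] MvPolynomial (Fin 2) ℂ)
    (hφ : φ = aeval ![C (α / δ) * X 0, C (α / δ) * (X 1 + C a * X 0)]) :
    φ ωx * C (α / δ) + φ ωy * C (α / δ) * C a
        = C (α ^ (d + 2) / δ ^ (d + 1)) * ((X 1) ^ d - (X 0) ^ d * X 1) ∧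
    φ ωy * C (α / δ) = C (α ^ (d + 2) / δ ^ (d + 1)) * (X 0) ^ (d + 1) := by
  rw [← mul_div_cancel₀ α hδ] at hωx
  rw [hωx, hωy, hφ, pow_add_two_div_pow_add_one hδ]
  exact pullback_scaledShear a (α / δ) d δ

theorem stmt_5 (d : ℕ) (hd : 2 ≤ d) (a α δ : ℂ) (hα : α ≠ 0) (hδ : δ ≠ 0)
    (ωx ωy : MvPolynomial (Fin 2) ℂ)
    (hωx : ωx = C α * (X 1 - C a * X 0) ^ d - C δ * (X 0) ^ d * X 1)
    (hωy : ωy = C δ * (X 0) ^ (d + 1))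
    (φ : MvPolynomial (Fin 2) ℂ →ₐ[ℂ] MvPolynomial (Fin 2) ℂ)
    (hφ : φ = aeval ![C (α / δ) * X 0, C (α / δ) * (X 1 + C a * X 0)]) :
    φ ωx * C (α / δ) + φ ωy * C (α / δ) * C a
        = C (α ^ (d + 2) / δ ^ (d + 1)) * ((X 1) ^ d - (X 0) ^ d * X 1) ∧
    φ ωy * C (α / δ) = C (α ^ (d + 2) / δ ^ (d + 1)) * (X 0) ^ (d + 1) :=
  stmt_5_general d a α δ hδ ωx ωy hωx hωy φ hφ
end
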